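/- If K has a skeleton A and x ∈ A, then x has an eventually periodic coding: there is an eventually periodic ω ∈ Σ^ℕ with π(ω) = x. -/

import Mathlib

/-- Hata graph. -/
def hataGraph {ι E : Type*} (S : ι → E → E) (A : Set E) : SimpleGraph ι where
  Adj i j := i ≠ j ∧ (S i '' A ∩ S j '' A).Nonempty
  symm := by
    refine ⟨fun i j h => ?_⟩
    exact ⟨h.1.symm, by rw [Set.inter_comm]; exact h.2⟩
  loopless := by
    refine ⟨fun i h => ?_⟩
    exact h.1 rfl

/-- `cylMap S ω m = S (ω 0) ∘ ⋯ ∘ S (ω (m-1))`. -/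
def cylMap {E : Type*} {N : ℕ} (S : Fin N → E → E) (ω : ℕ → Fin N) : ℕ → E → E
  | 0 => id
  | m + 1 => cylMap S ω m ∘ S (ω m)

/-- A sequence is eventually periodic. -/
def EvPeriodic {α : Type*} (ω : ℕ → α) : Prop :=
  ∃ p m : ℕ, 1 ≤ m ∧ ∀ k, p ≤ k → ω (k + m) = ω k

/-!
Every point `a` of a skeleton `A` is `S i b` for some `b ∈ A`. Choosing such a predecessor once
and for all gives a self-map of the finite set `A`, whose orbit through `x` is eventually
periodic. The indices `i` read along this backward orbit `x = y 0, y 1, …` code `x`: each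
`cylMap S ω (m + 1) '' K` contains `x = cylMap S ω (m + 1) (y (m + 1))`.
-/

open Function

theorem EvPeriodic.comp {α β : Type*} {ω : ℕ → α} (h : EvPeriodic ω) (g : α → β) :
    EvPeriodic (g ∘ ω) := by
  obtain ⟨p, m, hm, hper⟩ := h
  exact ⟨p, m, hm, fun k hk => congrArg g (hper k hk)⟩

theorem evPeriodic_iterate {α : Type*} [Finite α] (f : α → α) (a : α) :
    EvPeriodic (fun n => f^[n] a) := by
  obtain ⟨p, q, hpq, heq⟩ :=
    Set.finite_univ.exists_lt_map_eq_of_forall_mem (f := fun n => f^[n] a) fun _ => Set.mem_univ _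
  have hperiodic : IsPeriodicPt f (q - p) (f^[p] a) := by
    change f^[q - p] (f^[p] a) = f^[p] a
    rw [← iterate_add_apply, Nat.sub_add_cancel hpq.le]
    exact heq.symm
  refine ⟨p, q - p, by omega, fun k hk => ?_⟩
  have hk' : f^[k] a = f^[k - p] (f^[p] a) := by rw [← iterate_add_apply, Nat.sub_add_cancel hk]
  show f^[k + (q - p)] a = f^[k] a
  rw [add_comm, iterate_add_apply, hk']
  exact hperiodic.apply_iterate (k - p)

theorem exists_evPeriodic_backward_orbit {E ι : Type*} (S : ι → E → E) {A : Set E}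
    (hAfin : A.Finite) (hstable : A ⊆ ⋃ i, S i '' A) {x : E} (hx : x ∈ A) :
    ∃ (ω : ℕ → ι) (y : ℕ → E), EvPeriodic ω ∧ y 0 = x ∧ (∀ k, y k ∈ A) ∧
      ∀ k, S (ω k) (y (k + 1)) = y k := by
  have hexists_pred : ∀ a : A, ∃ q : ι × A, S q.1 q.2 = a := fun a => by
    obtain ⟨i, b, hb, hSb⟩ := Set.mem_iUnion.1 (hstable a.2)
    exact ⟨(i, ⟨b, hb⟩), hSb⟩
  choose pred hpred using hexists_pred
  have : Finite A := hAfin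
  set orbit : ℕ → A := fun n => (Prod.snd ∘ pred)^[n] ⟨x, hx⟩
  refine ⟨Prod.fst ∘ pred ∘ orbit, fun k => orbit k,
    (evPeriodic_iterate _ _).comp (Prod.fst ∘ pred), rfl, fun k => (orbit k).2, fun k => ?_⟩
  simp only [orbit, comp_apply, iterate_succ_apply', hpred]

section Coding

variable {E : Type*} {N : ℕ} (S : Fin N → E → E) (ω : ℕ → Fin N)

theorem cylMap_apply_eq_of_backward_orbit {y : ℕ → E}
    (hy : ∀ k, S (ω k) (y (k + 1)) = y k) (m : ℕ) : cylMap S ω m (y m) = y 0 := by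
  induction m with
  | zero => rfl
  | succ m ih => simp only [cylMap, comp_apply, hy, ih]

theorem mem_iInter_cylMap_image_of_backward_orbit {K : Set E} {y : ℕ → E}
    (hy : ∀ k, S (ω k) (y (k + 1)) = y k) (hyK : ∀ k, y k ∈ K) :
    y 0 ∈ ⋂ m : ℕ, cylMap S ω (m + 1) '' K :=
  Set.mem_iInter.2 fun m => ⟨y (m + 1), hyK _, cylMap_apply_eq_of_backward_orbit S ω hy _⟩

end Coding

theorem skeleton_point_has_eventually_periodic_coding_general
    {d N : ℕ}
    (S : Fin N → EuclideanSpace ℝ (Fin d) → EuclideanSpace ℝ (Fin d))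
    (K : Set (EuclideanSpace ℝ (Fin d)))
    (π : (ℕ → Fin N) → EuclideanSpace ℝ (Fin d))
    (hπ : ∀ ω, (⋂ m : ℕ, cylMap S ω (m + 1) '' K) = {π ω})
    (A : Set (EuclideanSpace ℝ (Fin d)))
    (hAK : A ⊆ K) (hAfin : A.Finite)
    (hstable : A ⊆ ⋃ i, S i '' A) :
    ∀ x ∈ A, ∃ ω : ℕ → Fin N, EvPeriodic ω ∧ π ω = x := by
  intro x hx
  obtain ⟨ω, y, hω, rfl, hyA, hy⟩ := exists_evPeriodic_backward_orbit S hAfin hstable hx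
  have hmem := mem_iInter_cylMap_image_of_backward_orbit S ω hy fun k => hAK (hyA k)
  rw [hπ] at hmem
  exact ⟨ω, hω, hmem.symm⟩

theorem skeleton_point_has_eventually_periodic_coding
    {d N : ℕ}
    (S : Fin N → EuclideanSpace ℝ (Fin d) → EuclideanSpace ℝ (Fin d))
    (r : Fin N → ℝ)
    (hr : ∀ i, 0 < r i ∧ r i < 1)
    (hsim : ∀ i x y, dist (S i x) (S i y) = r i * dist x y)
    (K : Set (EuclideanSpace ℝ (Fin d)))
    (hKne : K.Nonempty) (hKc : IsCompact K)
    (hKinv : K = ⋃ i, S i '' K)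
    (π : (ℕ → Fin N) → EuclideanSpace ℝ (Fin d))
    (hπ : ∀ ω, (⋂ m : ℕ, cylMap S ω (m + 1) '' K) = {π ω})
    (A : Set (EuclideanSpace ℝ (Fin d)))
    (hAK : A ⊆ K) (hAfin : A.Finite)
    (hstable : A ⊆ ⋃ i, S i '' A)
    (hconn : (hataGraph S A).Connected) :
    ∀ x ∈ A, ∃ ω : ℕ → Fin N, EvPeriodic ω ∧ π ω = x :=
  skeleton_point_has_eventually_periodic_coding_general S K π hπ A hAK hAfin hstable
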